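/- Let S be a 2×2 real matrix and G a 2×2 real symmetric matrix. Then the complex Hermitian matrix G + i(J − S J Sᵀ) is positive semidefinite if and only if G is positive semidefinite and det G ≥ (1 − det S)². (In particular S J Sᵀ = (det S)·J, so the condition reads G + i(1 − det S)J ⪰ 0.) -/

import Mathlib

open Matrix ComplexOrder

noncomputable section

def J2 : Matrix (Fin 2) (Fin 2) ℝ := !![0, 1; -1, 0]

/-!
Since `S J Sᵀ = (det S) J`, the matrix in question is `G + i(1 - det S) J`, a Hermitian matrix
with trace `tr G` and determinant `det G - (1 - det S)²`. A Hermitian `2 × 2` matrix is positive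
semidefinite iff its trace and determinant are nonnegative (they are the sum and product of its two
real eigenvalues); applying this to both this matrix and `G` gives the equivalence.
-/

theorem Matrix.IsHermitian.posSemidef_iff_trace_nonneg_and_det_nonneg {𝕜 : Type*} [RCLike 𝕜]
    {A : Matrix (Fin 2) (Fin 2) 𝕜} (hA : A.IsHermitian) :
    A.PosSemidef ↔ 0 ≤ A.trace ∧ 0 ≤ A.det := by
  refine ⟨fun h ↦ ⟨h.trace_nonneg, h.det_nonneg⟩, fun ⟨htr, hdet⟩ ↦ ?_⟩
  rw [hA.trace_eq_sum_eigenvalues, Fin.sum_univ_two, ← RCLike.ofReal_add,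
    RCLike.ofReal_nonneg] at htr
  rw [hA.det_eq_prod_eigenvalues, Fin.prod_univ_two, ← RCLike.ofReal_mul,
    RCLike.ofReal_nonneg] at hdet
  refine hA.posSemidef_iff_eigenvalues_nonneg.mpr fun i ↦ ?_
  fin_cases i <;> dsimp <;> nlinarith

theorem mul_J2_mul_transpose (S : Matrix (Fin 2) (Fin 2) ℝ) : S * J2 * Sᵀ = S.det • J2 := by
  ext i j
  fin_cases i <;> fin_cases j <;> simp [J2, mul_apply, det_fin_two] <;> ring

section

variable {G : Matrix (Fin 2) (Fin 2) ℝ} (c : ℝ)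

theorem isHermitian_map_ofReal_add_I_smul_J2 (hG : G.IsSymm) :
    (G.map Complex.ofReal + Complex.I • (c • J2).map Complex.ofReal).IsHermitian := by
  have h10 : G 1 0 = G 0 1 := hG.apply 0 1
  ext i j
  fin_cases i <;> fin_cases j <;> simp [J2, h10]

theorem trace_map_ofReal_add_I_smul_J2 :
    (G.map Complex.ofReal + Complex.I • (c • J2).map Complex.ofReal).trace = G.trace := by
  simp [trace_fin_two, J2]

theorem det_map_ofReal_add_I_smul_J2 (hG : G.IsSymm) :
    (G.map Complex.ofReal + Complex.I • (c • J2).map Complex.ofReal).det = ↑(G.det - c ^ 2) := by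
  have h10 : G 1 0 = G 0 1 := hG.apply 0 1
  simp [det_fin_two, J2, h10]
  linear_combination (c : ℂ) ^ 2 * Complex.I_sq

end

/-- the complete positivity condition for a single-mode TGCP map is
equivalent to G ⪰ 0 together with det G ≥ (1 − det S)². -/
theorem TGCP_condition_iff (S G : Matrix (Fin 2) (Fin 2) ℝ) (hG : G.IsSymm) :
    (G.map (Complex.ofReal) +
        Complex.I • ((J2 - S * J2 * Sᵀ).map (Complex.ofReal))).PosSemidef ↔
      G.PosSemidef ∧ (1 - S.det)^2 ≤ G.det := by
  rw [show J2 - S * J2 * Sᵀ = (1 - S.det) • J2 by rw [mul_J2_mul_transpose, sub_smul, one_smul],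
    (isHermitian_map_ofReal_add_I_smul_J2 _ hG).posSemidef_iff_trace_nonneg_and_det_nonneg,
    (isHermitian_iff_isSymm.mpr hG).posSemidef_iff_trace_nonneg_and_det_nonneg,
    trace_map_ofReal_add_I_smul_J2, det_map_ofReal_add_I_smul_J2 _ hG,
    Complex.zero_le_real, Complex.zero_le_real, sub_nonneg]
  have := sq_nonneg (1 - S.det)
  exact ⟨fun ⟨htr, hdet⟩ ↦ ⟨⟨htr, by linarith⟩, hdet⟩, fun ⟨⟨htr, _⟩, hdet⟩ ↦ ⟨htr, hdet⟩⟩
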